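/- Let a ∈ ℓ^1(ℤ), let λ > 0, and let {I_j} be a family of pairwise disjoint dyadic intervals such that λ < (1/|I_j|) Σ_{k∈I_j} |a(k)| ≤ 2λ for every j and |a(n)| ≤ λ for every n ∉ ∪_j I_j. Then {m ∈ ℤ : M′a(m) > 4λ} ⊆ ∪_j 3I_j, where for a dyadic interval I = I_{N,j}, 3I denotes the interval {(j−2)2^N + 1, …, (j+1)2^N}. -/

import Mathlib

open scoped ENNReal
open MeasureTheory

/-- An interval in ℤ: a nonempty finite set of consecutive integers. -/
def IsIntervalZ (I : Finset ℤ) : Prop := ∃ n m : ℤ, n ≤ m ∧ I = Finset.Icc n m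

/-- The dyadic interval I_{N,j} = {(j-1)2^N + 1, …, j·2^N}. -/
noncomputable def dyadicI (N : ℕ) (j : ℤ) : Finset ℤ := Finset.Icc ((j - 1) * 2 ^ N + 1) (j * 2 ^ N)

/-- A dyadic interval is one of the form I_{N,j} with N a positive integer. -/
def IsDyadicZ (I : Finset ℤ) : Prop := ∃ N : ℕ, 0 < N ∧ ∃ j : ℤ, I = dyadicI N j

/-- The (uncentered) Hardy–Littlewood maximal operator. -/
noncomputable def Mop (a : ℤ → ℝ) (m : ℤ) : ℝ≥0∞ :=
  ⨆ (I : Finset ℤ) (_ : IsIntervalZ I) (_ : m ∈ I),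
    (∑ n ∈ I, ENNReal.ofReal |a n|) / I.card

/-- The centered Hardy–Littlewood maximal operator
`M′a(m) = sup_{r>0} (1/(2r)) ∑_{n=-r}^{r} |a(m-n)|`. -/
noncomputable def Mc (a : ℤ → ℝ) (m : ℤ) : ℝ≥0∞ :=
  ⨆ (r : ℕ) (_ : 0 < r),
    (∑ n ∈ Finset.Icc (-(r : ℤ)) (r : ℤ), ENNReal.ofReal |a (m - n)|) / (2 * (r : ℝ≥0∞))

/-- The dyadic maximal operator. -/
noncomputable def Md (a : ℤ → ℝ) (m : ℤ) : ℝ≥0∞ :=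
  ⨆ (I : Finset ℤ) (_ : IsDyadicZ I) (_ : m ∈ I),
    (∑ k ∈ I, ENNReal.ofReal |a k|) / I.card

/-- The average `a_I` of a sequence on a finite set. -/
noncomputable def avgI (a : ℤ → ℝ) (I : Finset ℤ) : ℝ := (∑ m ∈ I, a m) / I.card

/-- The sharp maximal operator. -/
noncomputable def Msharp (a : ℤ → ℝ) (m : ℤ) : ℝ≥0∞ :=
  ⨆ (I : Finset ℤ) (_ : IsIntervalZ I) (_ : m ∈ I),
    (∑ n ∈ I, ENNReal.ofReal |a n - avgI a I|) / I.card

/-- The tripled dyadic interval `3I_{N,j} = {(j-2)2^N + 1, …, (j+1)·2^N}`. -/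
noncomputable def tripleI (N : ℕ) (j : ℤ) : Finset ℤ := Finset.Icc ((j - 2) * 2 ^ N + 1) ((j + 1) * 2 ^ N)

/-!
If `m` lies outside every `3I_i`, then every selected interval that meets the window
`[m - r, m + r]` is short compared with `r` and stays inside `[m - (2r - 1), m + (2r - 1)]`.
On the selected intervals `|a|` has average at most `2λ`, elsewhere `|a| ≤ λ`, so the sum of
`|a|` over the window is at most `2λ (4r - 1) < 4λ · 2r`.
-/

open Finset Function

theorem card_dyadicI (N : ℕ) (j : ℤ) : #(dyadicI N j) = 2 ^ N := by
  rw [dyadicI, Int.card_Icc]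
  have : j * 2 ^ N + 1 - ((j - 1) * 2 ^ N + 1) = ((2 ^ N : ℕ) : ℤ) := by push_cast; ring
  rw [this, Int.toNat_natCast]

theorem dyadicI_subset_Icc_of_notMem_tripleI {N : ℕ} (hN : 0 < N) {j m k r : ℤ}
    (hm : m ∉ tripleI N j) (hk : k ∈ dyadicI N j) (hkm : |k - m| ≤ r) :
    dyadicI N j ⊆ Icc (m - (2 * r - 1)) (m + (2 * r - 1)) := by
  have hL : (2 : ℤ) ≤ 2 ^ N := le_self_pow₀ (by norm_num) hN.ne'
  intro x hx
  simp only [dyadicI, tripleI, mem_Icc, abs_le] at hm hk hx hkm ⊢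
  generalize (2 : ℤ) ^ N = L at hL hm hk hx
  have h1 : j * L = (j - 1) * L + L := by ring
  have h2 : (j - 2) * L = (j - 1) * L - L := by ring
  have h3 : (j + 1) * L = (j - 1) * L + 2 * L := by ring
  omega

theorem sum_le_two_mul_card_of_disjoint_cover {α ι : Type*} [DecidableEq α] {f : α → ℝ}
    (hf : 0 ≤ f) {lam : ℝ} (hlam : 0 ≤ lam) (I : ι → Finset α) (hdisj : Pairwise (Disjoint on I))
    (hI : ∀ i, ∑ k ∈ I i, f k ≤ 2 * lam * #(I i)) (hout : ∀ k, (∀ i, k ∉ I i) → f k ≤ lam)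
    {B W : Finset α} (hBW : B ⊆ W) (hW : ∀ i, ¬Disjoint (I i) B → I i ⊆ W) :
    ∑ k ∈ B, f k ≤ 2 * lam * #W := by
  classical
  -- The members of the family meeting `B`, collected inside `W.powerset` since `ι` may be infinite.
  set T := W.powerset.filter fun s => ∃ i, s = I i ∧ ¬Disjoint s B
  set U := T.biUnion id
  have hT : (T : Set (Finset α)).PairwiseDisjoint id := by
    rintro s hs t ht hst
    obtain ⟨i, rfl, -⟩ := (mem_filter.mp hs).2
    obtain ⟨i', rfl, -⟩ := (mem_filter.mp ht).2
    exact hdisj fun h => hst (h ▸ rfl)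
  have hUW : U ⊆ W := biUnion_subset.mpr fun s hs => mem_powerset.mp (mem_filter.mp hs).1
  have hsumU : ∑ k ∈ U, f k ≤ 2 * lam * #U := by
    rw [sum_biUnion hT, card_biUnion hT, Nat.cast_sum, mul_sum]
    refine sum_le_sum fun s hs => ?_
    obtain ⟨i, rfl, -⟩ := (mem_filter.mp hs).2
    exact hI i
  set V := B ∪ U
  have hout' : ∀ k ∈ V \ U, f k ≤ lam := by
    intro k hk
    obtain ⟨hkV, hkU⟩ := mem_sdiff.mp hk
    have hkB : k ∈ B := (mem_union.mp hkV).resolve_right hkU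
    refine hout k fun i hki => hkU (mem_biUnion.mpr ⟨I i, ?_, hki⟩)
    have hmeet : ¬Disjoint (I i) B := not_disjoint_iff.mpr ⟨k, hki, hkB⟩
    exact mem_filter.mpr ⟨mem_powerset.mpr (hW i hmeet), i, rfl, hmeet⟩
  have hcard : #(V \ U) + #U = #V := card_sdiff_add_card_eq_card subset_union_right
  calc ∑ k ∈ B, f k ≤ ∑ k ∈ V, f k :=
        sum_le_sum_of_subset_of_nonneg subset_union_left fun k _ _ => hf k
    _ = ∑ k ∈ V \ U, f k + ∑ k ∈ U, f k := (sum_sdiff subset_union_right).symm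
    _ ≤ lam * #(V \ U) + 2 * lam * #U := by
        gcongr
        exact (sum_le_card_nsmul _ _ _ hout').trans_eq (nsmul_eq_mul' _ _)
    _ ≤ 2 * lam * (#(V \ U) + #U) := by nlinarith [(#(V \ U)).cast_nonneg (α := ℝ)]
    _ = 2 * lam * #V := by rw [← hcard, Nat.cast_add]
    _ ≤ 2 * lam * #W := by gcongr; exact union_subset hBW hUW

theorem Mc_le_ofReal_of_sum_le {a : ℤ → ℝ} {m : ℤ} {c : ℝ}
    (h : ∀ r : ℕ, 0 < r → ∑ k ∈ Icc (m - r) (m + r), |a k| ≤ c * (2 * r)) :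
    Mc a m ≤ ENNReal.ofReal c := by
  refine iSup₂_le fun r hr => ENNReal.div_le_of_le_mul ?_
  have hreindex : ∑ n ∈ Icc (-(r : ℤ)) r, ENNReal.ofReal |a (m - n)|
      = ∑ k ∈ Icc (m - r) (m + r), ENNReal.ofReal |a k| :=
    sum_nbij' (m - ·) (m - ·) (fun n hn => by simp only [mem_Icc] at hn ⊢; omega)
      (fun k hk => by simp only [mem_Icc] at hk ⊢; omega) (fun n _ => by ring)
      (fun k _ => by ring) fun _ _ => rfl
  rw [hreindex, ← ENNReal.ofReal_sum_of_nonneg fun _ _ => abs_nonneg _]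
  calc ENNReal.ofReal (∑ k ∈ Icc (m - r) (m + r), |a k|)
      ≤ ENNReal.ofReal (c * (2 * r)) := ENNReal.ofReal_le_ofReal (h r hr)
    _ = ENNReal.ofReal c * (2 * r) := by
        rw [ENNReal.ofReal_mul' (by positivity)]; norm_cast

theorem statement11_general {ι : Type*} (a : ℤ → ℝ)
    (lam : ℝ) (hlam : 0 < lam) (N : ι → ℕ) (j : ι → ℤ) (hN : ∀ i, 0 < N i)
    (hdisj : Pairwise fun i i' => Disjoint (dyadicI (N i) (j i)) (dyadicI (N i') (j i')))
    (havg : ∀ i,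
      lam < (∑ k ∈ dyadicI (N i) (j i), |a k|) / ((dyadicI (N i) (j i)).card : ℝ) ∧
      (∑ k ∈ dyadicI (N i) (j i), |a k|) / ((dyadicI (N i) (j i)).card : ℝ) ≤ 2 * lam)
    (hout : ∀ n : ℤ, (∀ i, n ∉ dyadicI (N i) (j i)) → |a n| ≤ lam) :
    {m : ℤ | ENNReal.ofReal (4 * lam) < Mc a m} ⊆
      ⋃ i, (tripleI (N i) (j i) : Set ℤ) := by
  intro m hm
  by_contra hm3
  simp only [Set.mem_iUnion, mem_coe, not_exists] at hm3
  refine (Mc_le_ofReal_of_sum_le fun r hr => ?_).not_gt hm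
  have hsum_le : ∀ i, ∑ k ∈ dyadicI (N i) (j i), |a k| ≤ 2 * lam * #(dyadicI (N i) (j i)) :=
    fun i => (div_le_iff₀ (by rw [card_dyadicI]; positivity)).mp (havg i).2
  have hwindow := sum_le_two_mul_card_of_disjoint_cover (fun k => abs_nonneg (a k)) hlam.le _
    hdisj hsum_le hout (B := Icc (m - r) (m + r)) (W := Icc (m - (2 * r - 1)) (m + (2 * r - 1)))
    (Icc_subset_Icc (by omega) (by omega)) fun i hi => by
      obtain ⟨k, hki, hkB⟩ := not_disjoint_iff.mp hi
      exact dyadicI_subset_Icc_of_notMem_tripleI (hN i) (hm3 i) hki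
        (abs_le.mpr (by simp only [mem_Icc] at hkB; omega))
  have hW : (#(Icc (m - (2 * r - 1)) (m + (2 * r - 1))) : ℝ) = 4 * r - 1 := by
    rw [Int.card_Icc, show m + (2 * r - 1) + 1 - (m - (2 * r - 1)) = ((4 * r - 1 : ℕ) : ℤ) by omega,
      Int.toNat_natCast, Nat.cast_sub (by omega)]
    push_cast; ring
  rw [hW] at hwindow
  linarith

/-- If `{I_j}` is a Calderón–Zygmund family at height λ, then `{M′a > 4λ} ⊆ ⋃_j 3I_j`. -/
theorem statement11 {ι : Type*} (a : ℤ → ℝ) (ha : Summable fun m : ℤ => |a m|)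
    (lam : ℝ) (hlam : 0 < lam) (N : ι → ℕ) (j : ι → ℤ) (hN : ∀ i, 0 < N i)
    (hdisj : Pairwise fun i i' => Disjoint (dyadicI (N i) (j i)) (dyadicI (N i') (j i')))
    (havg : ∀ i,
      lam < (∑ k ∈ dyadicI (N i) (j i), |a k|) / ((dyadicI (N i) (j i)).card : ℝ) ∧
      (∑ k ∈ dyadicI (N i) (j i), |a k|) / ((dyadicI (N i) (j i)).card : ℝ) ≤ 2 * lam)
    (hout : ∀ n : ℤ, (∀ i, n ∉ dyadicI (N i) (j i)) → |a n| ≤ lam) :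
    {m : ℤ | ENNReal.ofReal (4 * lam) < Mc a m} ⊆
      ⋃ i, (tripleI (N i) (j i) : Set ℤ) :=
  statement11_general a lam hlam N j hN hdisj havg hout
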